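/- Fix k₀ ∈ ℕ, c, C > 0, and γ ∈ (1/2, 1], with c ≥ 16 if γ = 1. Suppose {s_k} is a nonnegative real sequence satisfying s_{k+1} ≤ (1 − c k^{−γ}) s_k + C k^{−2γ} for all k ≥ k₀. Then there exists a constant C_ub depending only on c, C, γ, k₀ such that s_k ≤ C_ub · k^{−γ} for all k ≥ 1. -/

import Mathlib

/-!
For large `k` we have `c k^{-γ} ≤ 1` and `γ k^{γ-1} ≤ c/2`; from then on the profile
`A k^{-γ}` with `A ≥ 2C/c` is a supersolution of the recursion:
`(1 - c k^{-γ}) A k^{-γ} + C k^{-2γ} ≤ A k^{-γ} - (c/2) A k^{-2γ} ≤ A (k^{-γ} - γ k^{-γ-1}) ≤ A (k+1)^{-γ}`,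
the last step being Bernoulli's inequality. Induction from a large index gives the bound
eventually, and the finitely many earlier terms are absorbed into the constant.
-/

open Filter

lemma rpow_neg_sub_mul_rpow_neg_sub_one_le {γ x : ℝ} (hγ0 : 0 ≤ γ) (hγ1 : γ ≤ 1) (hx : 0 < x) :
    x ^ (-γ) - γ * x ^ (-γ - 1) ≤ (x + 1) ^ (-γ) := by
  have hbase : 0 < 1 + x⁻¹ := by positivity
  have hbern : (1 + x⁻¹) ^ γ ≤ 1 + γ * x⁻¹ :=
    rpow_one_add_le_one_add_mul_self (by linarith [inv_pos.2 hx]) hγ0 hγ1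
  have hfactor : 1 - γ * x⁻¹ ≤ (1 + x⁻¹) ^ (-γ) := by
    rw [Real.rpow_neg hbase.le]
    calc 1 - γ * x⁻¹ ≤ (1 + γ * x⁻¹)⁻¹ := by
          rw [← one_div (1 + γ * x⁻¹), le_div_iff₀ (by positivity)]
          nlinarith [sq_nonneg (γ * x⁻¹)]
      _ ≤ ((1 + x⁻¹) ^ γ)⁻¹ := inv_anti₀ (by positivity) hbern
  calc x ^ (-γ) - γ * x ^ (-γ - 1) = x ^ (-γ) * (1 - γ * x⁻¹) := by
        rw [Real.rpow_sub_one hx.ne']; ring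
    _ ≤ x ^ (-γ) * (1 + x⁻¹) ^ (-γ) := by gcongr
    _ = (x + 1) ^ (-γ) := by
        rw [← Real.mul_rpow hx.le hbase.le, mul_add, mul_one, mul_inv_cancel₀ hx.ne']

lemma le_mul_rpow_neg_add_one_of_contraction {c C γ A x s s' : ℝ} (hx : 0 < x)
    (hγ0 : 0 ≤ γ) (hγ1 : γ ≤ 1) (hA : 0 ≤ A) (hCA : C ≤ c / 2 * A)
    (hcx : c * x ^ (-γ) ≤ 1) (hγx : γ * x ^ (γ - 1) ≤ c / 2)
    (hs : s ≤ A * x ^ (-γ)) (hs' : s' ≤ (1 - c * x ^ (-γ)) * s + C * x ^ (-(2 * γ))) :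
    s' ≤ A * (x + 1) ^ (-γ) := by
  have hsq : x ^ (-γ) * x ^ (-γ) = x ^ (-(2 * γ)) := by
    rw [← Real.rpow_add hx]; ring_nf
  have hdrift : γ * x ^ (-γ - 1) ≤ c / 2 * x ^ (-(2 * γ)) := by
    rw [show -γ - 1 = (γ - 1) + -(2 * γ) by ring, Real.rpow_add hx, ← mul_assoc]
    gcongr
  have hnoise : C * x ^ (-(2 * γ)) ≤ c / 2 * A * x ^ (-(2 * γ)) := by gcongr
  calc s' ≤ (1 - c * x ^ (-γ)) * (A * x ^ (-γ)) + C * x ^ (-(2 * γ)) :=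
        hs'.trans (by gcongr)
    _ = A * x ^ (-γ) - c * A * x ^ (-(2 * γ)) + C * x ^ (-(2 * γ)) := by rw [← hsq]; ring
    _ ≤ A * (x ^ (-γ) - γ * x ^ (-γ - 1)) := by
        nlinarith [mul_le_mul_of_nonneg_left hdrift hA]
    _ ≤ A * (x + 1) ^ (-γ) := by gcongr; exact rpow_neg_sub_mul_rpow_neg_sub_one_le hγ0 hγ1 hx

section Contraction

variable {c C γ : ℝ} {s : ℕ → ℝ} {K : ℕ}

lemma le_mul_rpow_neg_of_contraction {A : ℝ} (hK : 1 ≤ K) (hγ0 : 0 ≤ γ) (hγ1 : γ ≤ 1)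
    (hA : 0 ≤ A) (hCA : C ≤ c / 2 * A)
    (hsmall : ∀ k ≥ K, c * (k : ℝ) ^ (-γ) ≤ 1 ∧ γ * (k : ℝ) ^ (γ - 1) ≤ c / 2)
    (hrec : ∀ k ≥ K,
      s (k + 1) ≤ (1 - c * (k : ℝ) ^ (-γ)) * s k + C * (k : ℝ) ^ (-(2 * γ)))
    (hsK : s K ≤ A * (K : ℝ) ^ (-γ)) :
    ∀ k ≥ K, s k ≤ A * (k : ℝ) ^ (-γ) := by
  intro k hk
  induction k, hk using Nat.le_induction with
  | base => exact hsK
  | succ k hk ih =>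
    push_cast
    exact le_mul_rpow_neg_add_one_of_contraction (by norm_cast; omega) hγ0 hγ1 hA hCA
      (hsmall k hk).1 (hsmall k hk).2 ih (hrec k hk)

lemma exists_le_mul_rpow_neg_of_contraction (hc : 0 < c) (hC : 0 ≤ C) (hK : 1 ≤ K)
    (hγ0 : 0 ≤ γ) (hγ1 : γ ≤ 1)
    (hsmall : ∀ k ≥ K, c * (k : ℝ) ^ (-γ) ≤ 1 ∧ γ * (k : ℝ) ^ (γ - 1) ≤ c / 2)
    (hrec : ∀ k ≥ K,
      s (k + 1) ≤ (1 - c * (k : ℝ) ^ (-γ)) * s k + C * (k : ℝ) ^ (-(2 * γ))) :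
    ∃ A, ∀ k ≥ K, s k ≤ A * (k : ℝ) ^ (-γ) := by
  have hKpos : (0 : ℝ) < (K : ℝ) ^ (-γ) := Real.rpow_pos_of_pos (by norm_cast) _
  set A := max (2 * C / c) (s K / (K : ℝ) ^ (-γ))
  have hA : 0 ≤ A := (by positivity : 0 ≤ 2 * C / c).trans (le_max_left _ _)
  have hCA : C ≤ c / 2 * A := by
    calc C = c / 2 * (2 * C / c) := by field_simp
      _ ≤ c / 2 * A := by gcongr; exact le_max_left _ _
  have hsK : s K ≤ A * (K : ℝ) ^ (-γ) := (div_le_iff₀ hKpos).1 (le_max_right _ _)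
  exact ⟨A, le_mul_rpow_neg_of_contraction hK hγ0 hγ1 hA hCA hsmall hrec hsK⟩

end Contraction

lemma exists_forall_le_mul_of_eventually_le {s f : ℕ → ℝ} {A : ℝ}
    (hf : ∀ k, 1 ≤ k → 0 < f k) (h : ∀ᶠ k in atTop, s k ≤ A * f k) :
    ∃ B, ∀ k, 1 ≤ k → s k ≤ B * f k := by
  obtain ⟨K, hK⟩ := eventually_atTop.1 h
  obtain ⟨M, hM⟩ := ((Finset.range K).image fun k ↦ s k / f k).exists_le
  refine ⟨max A M, fun k hk ↦ ?_⟩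
  rcases le_or_gt K k with hKk | hkK
  · exact (hK k hKk).trans (by gcongr; exacts [(hf k hk).le, le_max_left _ _])
  · have hMk : s k / f k ≤ M := hM _ (Finset.mem_image_of_mem _ (Finset.mem_range.2 hkK))
    calc s k = s k / f k * f k := (div_mul_cancel₀ _ (hf k hk).ne').symm
      _ ≤ max A M * f k := by gcongr; exacts [(hf k hk).le, hMk.trans (le_max_right _ _)]

lemma eventually_mul_natCast_rpow_le {a p ε : ℝ} (hp : p < 0) (hε : 0 < ε) :
    ∀ᶠ k : ℕ in atTop, a * (k : ℝ) ^ p ≤ ε := by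
  have h := ((tendsto_rpow_neg_atTop (neg_pos.2 hp)).comp tendsto_natCast_atTop_atTop).const_mul a
  rw [mul_zero, neg_neg] at h
  exact h.eventually_le_const hε

theorem sequence_decay_of_contraction_recursion_general
    (k0 : ℕ) (c C γ : ℝ) (hc : 0 < c) (hC : 0 < C) (hγ : 1 / 2 < γ ∧ γ ≤ 1)
    (hc16 : γ = 1 → 16 ≤ c)
    (s : ℕ → ℝ)
    (hrec : ∀ k, k0 ≤ k →
      s (k + 1) ≤ (1 - c * (k : ℝ) ^ (-γ)) * s k + C * (k : ℝ) ^ (-(2 * γ))) :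
    ∃ Cub : ℝ, ∀ k : ℕ, 1 ≤ k → s k ≤ Cub * (k : ℝ) ^ (-γ) := by
  obtain ⟨hγ0, hγ1⟩ : 0 < γ ∧ γ ≤ 1 := ⟨by linarith [hγ.1], hγ.2⟩
  have hcontr := eventually_mul_natCast_rpow_le (a := c) (neg_lt_zero.2 hγ0) one_pos
  have hdrift : ∀ᶠ k : ℕ in atTop, γ * (k : ℝ) ^ (γ - 1) ≤ c / 2 := by
    rcases hγ1.lt_or_eq with hlt | rfl
    · exact eventually_mul_natCast_rpow_le (sub_neg.2 hlt) (half_pos hc)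
    · simp only [sub_self, Real.rpow_zero, mul_one]
      exact .of_forall fun _ ↦ by linarith [hc16 rfl]
  obtain ⟨K, hK⟩ := eventually_atTop.1
    (hcontr.and (hdrift.and (eventually_ge_atTop (max k0 1))))
  obtain ⟨A, hA⟩ := exists_le_mul_rpow_neg_of_contraction hc hC.le
    (by have := (hK K le_rfl).2.2; omega) hγ0.le hγ1
    (fun k hk ↦ ⟨(hK k hk).1, (hK k hk).2.1⟩)
    (fun k hk ↦ hrec k (by have := (hK k hk).2.2; omega))
  exact exists_forall_le_mul_of_eventually_le
    (fun k hk ↦ Real.rpow_pos_of_pos (by exact_mod_cast hk) _) (eventually_atTop.2 ⟨K, hA⟩)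

/-- Deterministic sequence lemma: if a nonnegative sequence satisfies the
contraction recursion `s_{k+1} ≤ (1 − c k^{−γ}) s_k + C k^{−2γ}` for all `k ≥ k₀`, with
`γ ∈ (1/2, 1]` and `c ≥ 16` if `γ = 1`, then `s_k ≤ C_ub · k^{−γ}` for all `k ≥ 1` and some
constant `C_ub`. -/
theorem sequence_decay_of_contraction_recursion
    (k0 : ℕ) (c C γ : ℝ) (hc : 0 < c) (hC : 0 < C) (hγ : 1 / 2 < γ ∧ γ ≤ 1)
    (hc16 : γ = 1 → 16 ≤ c)
    (s : ℕ → ℝ) (hpos : ∀ k, 0 ≤ s k)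
    (hrec : ∀ k, k0 ≤ k →
      s (k + 1) ≤ (1 - c * (k : ℝ) ^ (-γ)) * s k + C * (k : ℝ) ^ (-(2 * γ))) :
    ∃ Cub : ℝ, ∀ k : ℕ, 1 ≤ k → s k ≤ Cub * (k : ℝ) ^ (-γ) :=
  sequence_decay_of_contraction_recursion_general k0 c C γ hc hC hγ hc16 s hrec
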